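/- There is an absolute constant C > 0 such that for every integer q ≥ 2, every nonprincipal Dirichlet character χ modulo q, all integers k ≥ 1 and L ≥ 1, and every real α > 1: M(χ)^{2k} ≤ C^k · ( ∑_{l=1}^L l^{−α−α/(2k−1)} )^{2k−1} · ∑_{l=1}^L l^{2kα} · ∑_{m=0}^{2^l−1} | ∑_{q·m/2^l < n ≤ q·(2m+1)/2^{l+1}} χ(n) |^{2k} + C^k · q^{2k} · 2^{−2kL}, where the innermost sum is over integers n in the stated interval. -/

import Mathlib

open Finset Real

/-- `S_χ(t) = ∑_{n ≤ t} χ(n)` for integer `t`. -/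
noncomputable def charSum {q : ℕ} (χ : DirichletCharacter ℂ q) (t : ℕ) : ℂ :=
  ∑ n ∈ Finset.Icc 1 t, χ n

/-- `M(χ) = max_{1 ≤ t ≤ q} |S_χ(t)|`. -/
noncomputable def Mmax {q : ℕ} (χ : DirichletCharacter ℂ q) : ℝ :=
  (((Finset.Icc 1 q).sup fun t => ‖charSum χ t‖₊ : NNReal) : ℝ)

/-- The dyadic block sum `∑_{q m/2^l < n ≤ q (2m+1)/2^{l+1}} χ(n)`. -/
noncomputable def dyadicBlock {q : ℕ} (χ : DirichletCharacter ℂ q) (l m : ℕ) : ℂ :=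
  ∑ n ∈ (Finset.range (q + 1)).filter
      (fun n : ℕ => (q : ℝ) * m / 2 ^ l < n ∧ (n : ℝ) ≤ (q : ℝ) * (2 * m + 1) / 2 ^ (l + 1)),
    χ n

/-!
Round `t/q` up to a dyadic fraction `c/2^(L+1)` and read its binary digits from the last one:
each digit `1` at level `l ≥ 1` contributes the left half of a dyadic interval of level `l`, i.e.
one block `dyadicBlock χ l m`. The digit at level `0` contributes `S_χ(0) = 0`, `S_χ(q) = 0` (as `χ`
is nonprincipal) or `S_χ(q/2)`, and the latter is decomposed in the same way along the points
`q/2 - q/2^(l+1)`. Both roundings cost `O(q/2^L)`; when `q ≤ 2^L` this needs that the only integer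
close to `q/2` is `q/2` itself, where `χ` vanishes. Hence `M(χ) ≤ 2 ∑_{l ≤ L} B_l + 2q/2^L`, where
`B_l` is the largest block of level `l`, and Hölder's inequality with weights `l^(-α-α/(2k-1))`
bounds `(∑ B_l)^(2k)` by the main term (with `C = 16`).
-/

/-- Radon's inequality. -/
lemma Finset.pow_sum_le_pow_sum_mul_sum_pow_div_pow {ι : Type*} {s : Finset ι} {w f : ι → ℝ}
    (hw : ∀ i ∈ s, 0 < w i) (hf : ∀ i ∈ s, 0 ≤ f i) (n : ℕ) :
    (∑ i ∈ s, f i) ^ (n + 1) ≤ (∑ i ∈ s, w i) ^ n * ∑ i ∈ s, f i ^ (n + 1) / w i ^ n := by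
  obtain rfl | hs := s.eq_empty_or_nonempty
  · simp
  set W := ∑ i ∈ s, w i
  have hW : 0 < W := sum_pos hw hs
  have jensen := Real.pow_arith_mean_le_arith_mean_pow s (fun i => w i / W) (fun i => f i / w i)
    (fun i hi => (div_pos (hw i hi) hW).le) (by rw [← sum_div, div_self hW.ne'])
    (fun i hi => div_nonneg (hf i hi) (hw i hi).le) (n + 1)
  have hmean : ∑ i ∈ s, w i / W * (f i / w i) = (∑ i ∈ s, f i) / W := by
    rw [sum_div]
    exact sum_congr rfl fun i hi => by field_simp [(hw i hi).ne']
  have hpow : ∑ i ∈ s, w i / W * (f i / w i) ^ (n + 1) =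
      (∑ i ∈ s, f i ^ (n + 1) / w i ^ n) / W := by
    rw [sum_div]
    refine sum_congr rfl fun i hi => ?_
    rw [div_pow, pow_succ (w i)]
    field_simp [(hw i hi).ne']
  rw [hmean, hpow, div_pow, div_le_div_iff₀ (pow_pos hW _) hW, pow_succ W] at jensen
  nlinarith

lemma exists_dyadic_point_mem_Icc {q : ℕ} (hq : 0 < q) {x : ℝ} (hx : 0 ≤ x) (hxq : x ≤ q)
    (N : ℕ) : ∃ c : ℕ, c ≤ 2 ^ N ∧ (q : ℝ) * c / 2 ^ N ∈ Set.Icc x (x + q / 2 ^ N) := by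
  set y := x * 2 ^ N / q
  have hy : 0 ≤ y := by positivity
  have hxy : x = q * y / 2 ^ N := by simp only [y]; field_simp
  refine ⟨⌈y⌉₊, Nat.ceil_le.2 ?_, ?_, ?_⟩
  · rw [div_le_iff₀ (by positivity), Nat.cast_pow, Nat.cast_ofNat, mul_comm]
    gcongr
  · rw [hxy]
    gcongr
    exact Nat.le_ceil y
  · rw [hxy, ← add_div, ← mul_add_one]
    gcongr
    exact (Nat.ceil_lt_add_one hy).le

lemma pow_two_mul_add_le {x y : ℝ} (hx : 0 ≤ x) (hy : 0 ≤ y) (k : ℕ) :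
    (2 * (x + y)) ^ (2 * k) ≤ 16 ^ k * (x ^ (2 * k) + y ^ (2 * k)) := by
  have h2 : (2 : ℝ) ^ (2 * k - 1) ≤ 4 ^ k := by
    rw [show (4 : ℝ) = 2 ^ 2 by norm_num, ← pow_mul]
    exact pow_le_pow_right₀ one_le_two (Nat.sub_le _ _)
  calc (2 * (x + y)) ^ (2 * k) = 4 ^ k * (x + y) ^ (2 * k) := by
        rw [mul_pow, pow_mul]; norm_num
    _ ≤ 4 ^ k * (4 ^ k * (x ^ (2 * k) + y ^ (2 * k))) := by
        gcongr
        exact (add_pow_le hx hy _).trans (by gcongr)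
    _ = 16 ^ k * (x ^ (2 * k) + y ^ (2 * k)) := by
        rw [← mul_assoc, ← mul_pow]; norm_num

namespace DirichletCharacter

variable {q : ℕ} (χ : DirichletCharacter ℂ q)

/-- `∑_{a < n ≤ b} χ(n)`, counting only `n ≤ q`, as in `dyadicBlock`. -/
noncomputable def intervalSum (a b : ℝ) : ℂ :=
  ∑ n ∈ (range (q + 1)).filter (fun n : ℕ => a < (n : ℝ) ∧ (n : ℝ) ≤ b), χ n

lemma dyadicBlock_eq_intervalSum (l m : ℕ) :
    dyadicBlock χ l m =
      χ.intervalSum ((q : ℝ) * m / 2 ^ l) ((q : ℝ) * (2 * m + 1) / 2 ^ (l + 1)) :=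
  rfl

lemma intervalSum_self (a : ℝ) : χ.intervalSum a a = 0 :=
  sum_eq_zero fun n hn => by
    simp only [mem_filter] at hn
    exact absurd hn.2.1 hn.2.2.not_gt

lemma intervalSum_add_intervalSum {a b c : ℝ} (hab : a ≤ b) (hbc : b ≤ c) :
    χ.intervalSum a b + χ.intervalSum b c = χ.intervalSum a c := by
  simp only [intervalSum, sum_filter, ← sum_add_distrib]
  refine sum_congr rfl fun n _ => ?_
  split_ifs <;> grind

lemma norm_intervalSum_le {a b : ℝ} (ha : 0 ≤ a) (hab : a ≤ b) :
    ‖χ.intervalSum a b‖ ≤ (⌊b⌋₊ : ℝ) - ⌊a⌋₊ := by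
  set s := (range (q + 1)).filter (fun n : ℕ => a < (n : ℝ) ∧ (n : ℝ) ≤ b)
  have hsub : s ⊆ Ioc ⌊a⌋₊ ⌊b⌋₊ := fun n hn => by
    simp only [s, mem_filter] at hn
    exact mem_Ioc.2 ⟨(Nat.floor_lt ha).2 hn.2.1, Nat.le_floor hn.2.2⟩
  calc ‖χ.intervalSum a b‖ ≤ #s := (norm_sum_le_of_le s fun n _ => χ.norm_le_one n).trans_eq (by simp)
    _ ≤ #(Ioc ⌊a⌋₊ ⌊b⌋₊) := by exact_mod_cast card_le_card hsub
    _ = (⌊b⌋₊ : ℝ) - ⌊a⌋₊ := by rw [Nat.card_Ioc, Nat.cast_sub (Nat.floor_mono hab)]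

lemma level_two {R : Type*} [CommMonoidWithZero R] (ψ : DirichletCharacter R 2) : ψ = 1 := by
  ext
  simp [Units.eq_one]

lemma apply_eq_zero_of_two_mul_eq (hq : q ≠ 2) {n : ℕ} (hn : 2 * n = q) : χ n = 0 := by
  refine MulChar.map_nonunit χ fun hunit => hq ?_
  have hcop : n.Coprime n :=
    ((ZMod.isUnit_iff_coprime n q).1 hunit).coprime_dvd_right ⟨2, by omega⟩
  rw [Nat.coprime_self] at hcop
  omega

lemma charSum_eq_intervalSum {t : ℕ} (ht : t ≤ q) : charSum χ t = χ.intervalSum 0 t := by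
  refine sum_congr ?_ fun _ _ => rfl
  ext n
  simp only [mem_Icc, mem_filter, mem_range, Nat.cast_pos, Nat.cast_le]
  omega

lemma charSum_self_eq_zero (hχ : χ ≠ 1) : charSum χ q = 0 := by
  rcases Nat.eq_zero_or_pos q with rfl | hq
  · simp [charSum]
  have : NeZero q := ⟨hq.ne'⟩
  have hperiod : charSum χ q = ∑ n ∈ range q, χ n := by
    rw [charSum, ← Ico_add_one_right_eq_Icc, sum_Ico_eq_sub _ (by omega), sum_range_succ,
      sum_range_one, ZMod.natCast_self, Nat.cast_zero, add_sub_cancel_right]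
  rw [hperiod, ← MulChar.sum_eq_zero_of_ne_one hχ]
  refine sum_nbij' (fun n => (n : ZMod q)) ZMod.val (by simp) (by simp [ZMod.val_lt])
    (fun n hn => ?_) (by simp) (by simp)
  simp [ZMod.val_natCast, Nat.mod_eq_of_lt (mem_range.1 hn)]

noncomputable def blockMax (l : ℕ) : ℝ :=
  (range (2 ^ l)).sup' (nonempty_range_iff.2 (pow_ne_zero l two_ne_zero))
    fun m => ‖dyadicBlock χ l m‖

lemma norm_dyadicBlock_le_blockMax {l m : ℕ} (hm : m < 2 ^ l) :
    ‖dyadicBlock χ l m‖ ≤ χ.blockMax l :=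
  le_sup' (fun m => ‖dyadicBlock χ l m‖) (mem_range.2 hm)

lemma blockMax_nonneg (l : ℕ) : 0 ≤ χ.blockMax l :=
  (norm_nonneg _).trans (χ.norm_dyadicBlock_le_blockMax (Nat.two_pow_pos l))

lemma blockMax_pow_le_sum (l n : ℕ) :
    χ.blockMax l ^ n ≤ ∑ m ∈ range (2 ^ l), ‖dyadicBlock χ l m‖ ^ n := by
  obtain ⟨m, hm, hmax⟩ := exists_mem_eq_sup' (nonempty_range_iff.2 (pow_ne_zero l two_ne_zero))
    fun m => ‖dyadicBlock χ l m‖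
  rw [blockMax, hmax]
  exact single_le_sum (f := fun m => ‖dyadicBlock χ l m‖ ^ n) (fun i _ => by positivity) hm

lemma intervalSum_zero_add_dyadicBlock (l j : ℕ) :
    χ.intervalSum 0 (q * j / 2 ^ l) + dyadicBlock χ l j =
      χ.intervalSum 0 (q * (2 * j + 1 : ℕ) / 2 ^ (l + 1)) := by
  have hle : (q : ℝ) * j / 2 ^ l ≤ q * (2 * j + 1) / 2 ^ (l + 1) := by
    rw [show (q : ℝ) * j / 2 ^ l = q * (2 * j) / 2 ^ (l + 1) by rw [pow_succ]; field_simp]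
    gcongr
    linarith
  rw [dyadicBlock_eq_intervalSum, intervalSum_add_intervalSum _ (by positivity) hle]
  push_cast
  rfl

lemma norm_intervalSum_dyadic_le (L : ℕ) {c : ℕ} (hc : c ≤ 2 ^ (L + 1)) :
    ‖χ.intervalSum 0 (q * c / 2 ^ (L + 1))‖ ≤
      ‖χ.intervalSum 0 (q * (c / 2 ^ L : ℕ) / 2)‖ + ∑ l ∈ Icc 1 L, χ.blockMax l := by
  induction L generalizing c with
  | zero => simp
  | succ L ih =>
    rw [sum_Icc_succ_top (by omega), ← add_assoc]
    have hdiv : ∀ j, (2 * j + 1) / 2 ^ (L + 1) = j / 2 ^ L ∧ 2 * j / 2 ^ (L + 1) = j / 2 ^ L :=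
      fun j => by
        rw [pow_succ, Nat.mul_comm _ 2, ← Nat.div_div_eq_div_mul, ← Nat.div_div_eq_div_mul]
        constructor <;> congr 1 <;> omega
    rw [pow_succ 2 (L + 1)] at hc
    obtain ⟨j, rfl | rfl⟩ := Nat.even_or_odd' c
    · have hz : (q : ℝ) * (2 * j : ℕ) / 2 ^ (L + 1 + 1) = q * j / 2 ^ (L + 1) := by
        push_cast
        rw [pow_succ _ (L + 1)]
        field_simp
      rw [hz, (hdiv j).2]
      exact (ih (by omega)).trans (le_add_of_nonneg_right (χ.blockMax_nonneg _))
    · rw [← intervalSum_zero_add_dyadicBlock, (hdiv j).1]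
      exact (norm_add_le _ _).trans
        (add_le_add (ih (by omega)) (χ.norm_dyadicBlock_le_blockMax (by omega)))

lemma norm_intervalSum_sub_half_le (hq : q ≠ 2) {h : ℝ} (h0 : 0 ≤ h) (hh : h ≤ q / 2) :
    ‖χ.intervalSum (q / 2 - h) (q / 2)‖ ≤ 3 * h := by
  by_cases hsmall : 2 * h ≤ 1
  · -- the only integer in the interval is `q / 2`, where `χ` vanishes
    have hzero : χ.intervalSum (q / 2 - h) (q / 2) = 0 := sum_eq_zero fun n hn => by
      simp only [mem_filter] at hn
      have hle : 2 * n ≤ q := by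
        exact_mod_cast (show ((2 * n : ℕ) : ℝ) ≤ q by push_cast; linarith [hn.2.2])
      have hlt : q < 2 * n + 1 := by
        exact_mod_cast (show (q : ℝ) < (2 * n + 1 : ℕ) by push_cast; linarith [hn.2.1])
      exact χ.apply_eq_zero_of_two_mul_eq hq (by omega)
    rw [hzero, norm_zero]
    positivity
  · calc ‖χ.intervalSum (q / 2 - h) (q / 2)‖ ≤ (⌊(q : ℝ) / 2⌋₊ : ℝ) - ⌊(q : ℝ) / 2 - h⌋₊ :=
          χ.norm_intervalSum_le (by linarith) (by linarith)
      _ ≤ q / 2 - (q / 2 - h - 1) :=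
          sub_le_sub (Nat.floor_le (by positivity)) (Nat.sub_one_lt_floor _).le
      _ ≤ 3 * h := by linarith

lemma norm_intervalSum_zero_half_le (hq : q ≠ 2) (L : ℕ) :
    ‖χ.intervalSum 0 (q / 2)‖ ≤ ∑ l ∈ Icc 1 L, χ.blockMax l + 3 / 2 * (q / 2 ^ L) := by
  set h : ℝ := q / 2 ^ (L + 1)
  have h0 : 0 ≤ h := by positivity
  have hh : h ≤ q / 2 := div_le_div_of_nonneg_left q.cast_nonneg two_pos
    (le_self_pow₀ one_le_two (Nat.succ_ne_zero L))
  have hpoint : (q : ℝ) * (2 ^ L - 1 : ℕ) / 2 ^ (L + 1) = q / 2 - h := by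
    rw [Nat.cast_sub Nat.one_le_two_pow]
    simp only [h, pow_succ]
    push_cast
    field_simp
  have hfirst : ‖χ.intervalSum 0 (q / 2 - h)‖ ≤ ∑ l ∈ Icc 1 L, χ.blockMax l := by
    rw [← hpoint]
    refine (χ.norm_intervalSum_dyadic_le L (by rw [pow_succ]; omega)).trans_eq ?_
    rw [Nat.div_eq_of_lt (Nat.sub_lt Nat.one_le_two_pow one_pos)]
    simp [intervalSum_self]
  rw [← χ.intervalSum_add_intervalSum (by linarith) (by linarith : q / 2 - h ≤ q / 2)]
  calc _ ≤ ‖χ.intervalSum 0 (q / 2 - h)‖ + ‖χ.intervalSum (q / 2 - h) (q / 2)‖ := norm_add_le _ _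
    _ ≤ ∑ l ∈ Icc 1 L, χ.blockMax l + 3 * h :=
        add_le_add hfirst (χ.norm_intervalSum_sub_half_le hq h0 hh)
    _ = ∑ l ∈ Icc 1 L, χ.blockMax l + 3 / 2 * (q / 2 ^ L) := by
        simp only [h, pow_succ]; ring

lemma norm_charSum_le (hq : 3 ≤ q) (hχ : χ ≠ 1) {t : ℕ} (ht : t ≤ q) (L : ℕ) :
    ‖charSum χ t‖ ≤ 2 * (∑ l ∈ Icc 1 L, χ.blockMax l + q / 2 ^ L) := by
  obtain ⟨c, hc, htz, hzt⟩ :=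
    exists_dyadic_point_mem_Icc (q := q) (by omega) t.cast_nonneg (by exact_mod_cast ht) (L + 1)
  set z : ℝ := q * c / 2 ^ (L + 1)
  have htail : ‖χ.intervalSum t z‖ ≤ q / 2 ^ (L + 1) := by
    refine (χ.norm_intervalSum_le t.cast_nonneg htz).trans ?_
    rw [Nat.floor_natCast]
    linarith [Nat.floor_le (t.cast_nonneg.trans htz)]
  have hhead : ‖χ.intervalSum 0 z‖ ≤ ‖χ.intervalSum 0 (q / 2)‖ + ∑ l ∈ Icc 1 L, χ.blockMax l := by
    refine (χ.norm_intervalSum_dyadic_le L hc).trans (add_le_add_left ?_ _)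
    have hd : c / 2 ^ L ≤ 2 := Nat.div_le_of_le_mul (by rw [pow_succ] at hc; linarith)
    interval_cases c / 2 ^ L
    · simp [intervalSum_self]
    · simp
    · rw [show (q : ℝ) * (2 : ℕ) / 2 = q by push_cast; ring, ← charSum_eq_intervalSum χ le_rfl,
        charSum_self_eq_zero χ hχ, norm_zero]
      exact norm_nonneg _
  have hhalf := χ.norm_intervalSum_zero_half_le (by omega) L
  rw [charSum_eq_intervalSum χ ht,
    eq_sub_of_add_eq (χ.intervalSum_add_intervalSum t.cast_nonneg htz)]
  calc _ ≤ ‖χ.intervalSum 0 z‖ + ‖χ.intervalSum t z‖ := norm_sub_le _ _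
    _ ≤ 2 * (∑ l ∈ Icc 1 L, χ.blockMax l + q / 2 ^ L) := by
        rw [pow_succ, ← div_div] at htail
        linarith

lemma Mmax_le {X : ℝ} (hX : 0 ≤ X) (h : ∀ t ∈ Icc 1 q, ‖charSum χ t‖ ≤ X) : Mmax χ ≤ X := by
  rw [Mmax, ← Real.coe_toNNReal X hX, NNReal.coe_le_coe]
  exact Finset.sup_le fun t ht => by
    rw [← NNReal.coe_le_coe, coe_nnnorm, Real.coe_toNNReal X hX]
    exact h t ht

lemma sum_blockMax_pow_le {k : ℕ} (hk : 1 ≤ k) (L : ℕ) (α : ℝ) :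
    (∑ l ∈ Icc 1 L, χ.blockMax l) ^ (2 * k) ≤
      (∑ l ∈ Icc 1 L, (l : ℝ) ^ (-α - α / ((2 * k : ℝ) - 1))) ^ (2 * k - 1) *
        ∑ l ∈ Icc 1 L, (l : ℝ) ^ ((2 * k : ℝ) * α) *
          ∑ m ∈ range (2 ^ l), ‖dyadicBlock χ l m‖ ^ (2 * k) := by
  obtain ⟨n, hn⟩ : ∃ n, 2 * k = n + 1 := ⟨2 * k - 1, by omega⟩
  have hn' : 2 * k - 1 = n := by omega
  have hpos : ∀ l ∈ Icc 1 L, (0 : ℝ) < l := fun l hl => by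
    exact_mod_cast (mem_Icc.1 hl).1
  rw [hn', hn]
  refine (pow_sum_le_pow_sum_mul_sum_pow_div_pow
    (w := fun l : ℕ => (l : ℝ) ^ (-α - α / ((2 * k : ℝ) - 1)))
    (fun l hl => Real.rpow_pos_of_pos (hpos l hl) _) (fun l _ => χ.blockMax_nonneg l) n).trans ?_
  gcongr with l hl
  -- the weights are chosen so that `w_l ^ (1 - 2k) = l ^ (2kα)`
  have hweight : (((l : ℝ) ^ (-α - α / ((2 * k : ℝ) - 1))) ^ n)⁻¹ =
      (l : ℝ) ^ ((2 * k : ℝ) * α) := by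
    have hnk : (n : ℝ) = 2 * k - 1 := by
      rw [eq_sub_iff_add_eq]; exact_mod_cast hn.symm
    have hne : (2 * k : ℝ) - 1 ≠ 0 := by rw [← hnk]; exact_mod_cast (by omega : n ≠ 0)
    rw [← Real.rpow_natCast, ← Real.rpow_mul (hpos l hl).le, ← Real.rpow_neg (hpos l hl).le, hnk]
    congr 1
    field_simp
    ring
  rw [div_eq_mul_inv, mul_comm, hweight]
  gcongr
  exact χ.blockMax_pow_le_sum l _

end DirichletCharacter

theorem menchov_rademacher_bound :
    ∃ C : ℝ, 0 < C ∧ ∀ q : ℕ, 2 ≤ q → ∀ χ : DirichletCharacter ℂ q, χ ≠ 1 →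
      ∀ k L : ℕ, 1 ≤ k → 1 ≤ L → ∀ α : ℝ, 1 < α →
        Mmax χ ^ (2 * k) ≤
          C ^ k * (∑ l ∈ Finset.Icc 1 L, (l : ℝ) ^ (-α - α / ((2 * k : ℝ) - 1))) ^ (2 * k - 1) *
              (∑ l ∈ Finset.Icc 1 L, (l : ℝ) ^ ((2 * k : ℝ) * α) *
                ∑ m ∈ Finset.range (2 ^ l), ‖dyadicBlock χ l m‖ ^ (2 * k)) +
            C ^ k * (q : ℝ) ^ (2 * k) / 2 ^ (2 * k * L) := by
  refine ⟨16, by norm_num, fun q hq χ hχ k L hk _ α _ => ?_⟩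
  have hq3 : 3 ≤ q := by
    by_contra h
    obtain rfl : q = 2 := by omega
    exact hχ χ.level_two
  set B := ∑ l ∈ Icc 1 L, χ.blockMax l
  have hB : 0 ≤ B := sum_nonneg fun l _ => χ.blockMax_nonneg l
  have hM : Mmax χ ≤ 2 * (B + q / 2 ^ L) :=
    χ.Mmax_le (by positivity) fun t ht => χ.norm_charSum_le hq3 hχ (mem_Icc.1 ht).2 L
  calc Mmax χ ^ (2 * k) ≤ (2 * (B + q / 2 ^ L)) ^ (2 * k) :=
        pow_le_pow_left₀ (NNReal.coe_nonneg _) hM _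
    _ ≤ 16 ^ k * (B ^ (2 * k) + (q / 2 ^ L) ^ (2 * k)) := pow_two_mul_add_le hB (by positivity) k
    _ ≤ 16 ^ k * ((∑ l ∈ Icc 1 L, (l : ℝ) ^ (-α - α / ((2 * k : ℝ) - 1))) ^ (2 * k - 1) *
          ∑ l ∈ Icc 1 L, (l : ℝ) ^ ((2 * k : ℝ) * α) *
            ∑ m ∈ range (2 ^ l), ‖dyadicBlock χ l m‖ ^ (2 * k) + (q / 2 ^ L) ^ (2 * k)) := by
        gcongr
        exact χ.sum_blockMax_pow_le hk L α
    _ = _ := by rw [div_pow, ← pow_mul, mul_comm L]; ring
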